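/- Let WN = (P, T, F) be a safe and sound workflow net with at least one transition (equivalently, with ▶ ≠ ■). Then the set of runs of WN, viewed as a language over the alphabet T, coincides exactly with the set of model traces of the Declare specification DS(WN). (Theorem 1, combined.) -/

import Mathlib

open Classical

/-- The edge relation of the underlying bipartite graph of a Petri net:
places and transitions are nodes, flow pairs are directed edges. -/
def NetEdge {P T : Type} (Fpt : P → T → Prop) (Ftp : T → P → Prop) :
    (P ⊕ T) → (P ⊕ T) → Prop
  | Sum.inl p, Sum.inr t => Fpt p t
  | Sum.inr t, Sum.inl p => Ftp t p
  | _, _ => False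

/-- A workflow net: a Petri net with flow relation split into its
place-to-transition part `Fpt` and transition-to-place part `Ftp`,
a unique initial place `source` (empty preset), a unique output place `sink`
(empty postset), and every node on a directed path from `source` to `sink`. -/
structure WorkflowNet (P T : Type) where
  Fpt : P → T → Prop
  Ftp : T → P → Prop
  source : P
  sink : P
  source_pre_empty : ∀ t, ¬ Ftp t source
  sink_post_empty : ∀ t, ¬ Fpt sink t
  source_unique : ∀ p, (∀ t, ¬ Ftp t p) → p = source
  sink_unique : ∀ p, (∀ t, ¬ Fpt p t) → p = sink
  on_path : ∀ x : P ⊕ T,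
    Relation.ReflTransGen (NetEdge Fpt Ftp) (Sum.inl source) x ∧
    Relation.ReflTransGen (NetEdge Fpt Ftp) x (Sum.inl sink)

variable {P T : Type}

/-- The preset `•p` of a place: transitions `t` with `(t, p) ∈ F`. -/
def preset (N : WorkflowNet P T) (p : P) : Set T := {t | N.Ftp t p}

/-- The postset `p•` of a place: transitions `t` with `(p, t) ∈ F`. -/
def postset (N : WorkflowNet P T) (p : P) : Set T := {t | N.Fpt p t}

/-- The initial marking: one token on the initial place, none elsewhere. -/
noncomputable def initialMarking (N : WorkflowNet P T) : P → ℕ :=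
  fun p => if p = N.source then 1 else 0

/-- The final marking: one token on the output place, none elsewhere. -/
noncomputable def finalMarking (N : WorkflowNet P T) : P → ℕ :=
  fun p => if p = N.sink then 1 else 0

/-- A marking enables `t` iff every input place of `t` holds a token. -/
def Enables (N : WorkflowNet P T) (M : P → ℕ) (t : T) : Prop :=
  ∀ p, N.Fpt p t → 0 < M p

/-- `Fires N M t M'`: `t` is enabled at `M` and firing it yields `M'`. -/
def Fires (N : WorkflowNet P T) (M : P → ℕ) (t : T) (M' : P → ℕ) : Prop :=
  Enables N M t ∧ ∀ p,
    (N.Fpt p t ∧ ¬ N.Ftp t p → M' p = M p - 1) ∧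
    (N.Ftp t p ∧ ¬ N.Fpt p t → M' p = M p + 1) ∧
    (¬ (N.Fpt p t ∧ ¬ N.Ftp t p) → ¬ (N.Ftp t p ∧ ¬ N.Fpt p t) → M' p = M p)

/-- Successive firing of a finite sequence of transitions from a marking. -/
inductive FiresSeq (N : WorkflowNet P T) : (P → ℕ) → List T → (P → ℕ) → Prop
  | nil (M : P → ℕ) : FiresSeq N M [] M
  | cons {M M' M'' : P → ℕ} {t : T} {σ : List T} :
      Fires N M t M' → FiresSeq N M' σ M'' → FiresSeq N M (t :: σ) M''

/-- A firing sequence: fireable successively from the initial marking. -/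
def FiringSequence (N : WorkflowNet P T) (σ : List T) : Prop :=
  ∃ M, FiresSeq N (initialMarking N) σ M

/-- A reachable marking. -/
def Reachable (N : WorkflowNet P T) (M : P → ℕ) : Prop :=
  ∃ σ, FiresSeq N (initialMarking N) σ M

/-- A run: a firing sequence leading from the initial to the final marking. -/
def IsRun (N : WorkflowNet P T) (σ : List T) : Prop :=
  FiresSeq N (initialMarking N) σ (finalMarking N)

/-- Safety: every reachable marking puts at most one token in each place. -/
def Safe (N : WorkflowNet P T) : Prop :=
  ∀ M, Reachable N M → ∀ p, M p ≤ 1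

/-- Soundness: option to complete, proper completion, no dead transitions. -/
def Sound (N : WorkflowNet P T) : Prop :=
  (∀ M, Reachable N M → ∃ σ, FiresSeq N M σ (finalMarking N)) ∧
  (∀ M, Reachable N M → 0 < M N.sink → M = finalMarking N) ∧
  (∀ t : T, ∃ M, Reachable N M ∧ Enables N M t)

/-- `AtMostOne(A)`: at most one position of the trace carries a symbol of `A`. -/
def AtMostOneC {α : Type} (A : Set α) (σ : List α) : Prop :=
  ∀ i j : Fin σ.length, σ.get i ∈ A → σ.get j ∈ A → i = j

/-- `End(A)`: the trace is nonempty and its last symbol is in `A`. -/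
def EndC {α : Type} (A : Set α) (σ : List α) : Prop :=
  ∃ a ∈ A, σ.getLast? = some a

/-- `AlternatePrecedence(B, A)`: every `A`-position is preceded by a `B`-position
with no `A`-position strictly in between. -/
def AltPrecC {α : Type} (B A : Set α) (σ : List α) : Prop :=
  ∀ i : Fin σ.length, σ.get i ∈ A →
    ∃ j : Fin σ.length, j < i ∧ σ.get j ∈ B ∧
      ∀ k : Fin σ.length, j < k → k < i → σ.get k ∉ A

/-- The Declare constraint that Algorithm 1 generates from place `p`:
`AlternatePrecedence(•p, p•)` if both `•p` and `p•` are nonempty,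
`AtMostOne(p•)` if `•p = ∅`, and `End(•p)` if `p• = ∅`. -/
def PlaceConstraint (N : WorkflowNet P T) (p : P) (σ : List T) : Prop :=
  if preset N p = ∅ then AtMostOneC (postset N p) σ
  else if postset N p = ∅ then EndC (preset N p) σ
  else AltPrecC (preset N p) (postset N p) σ

/-- A model trace of the specification `DS(WN)`: it satisfies the
constraint generated from every place of the net. -/
def ModelTrace (N : WorkflowNet P T) (σ : List T) : Prop :=
  ∀ p : P, PlaceConstraint N p σ

/-!
In a safe net a place holds at most one token at any point of a run. A token on a place `p ≠ ▶`
was therefore produced by an occurrence of `•p` with no occurrence of `p•` since, as that would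
have emptied `p`: this gives `AlternatePrecedence(•p, p•)`. The place `▶` starts with its only token
and is never refilled, giving `AtMostOne(▶•)`, and if the last transition of a run did not mark
`■`, the marking before it would already mark `■`, hence be final by proper completion, and
enable nothing. Conversely, by induction along a model trace each transition finds a token on
every input place: the constraint of `p` points to an earlier occurrence of `•p` after which `p`
was not consumed. So the trace is a firing sequence, its last transition marks `■`, and proper
completion makes the reached marking final.
-/

variable {N : WorkflowNet P T}

def ProperCompletion (N : WorkflowNet P T) : Prop :=
  ∀ M, Reachable N M → 0 < M N.sink → M = finalMarking N

lemma le_of_forall_Ico_le_succ {α : Type*} [Preorder α] {f : ℕ → α} {a b : ℕ} (hab : a ≤ b)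
    (h : ∀ k, a ≤ k → k < b → f k ≤ f (k + 1)) : f a ≤ f b := by
  induction b, hab using Nat.le_induction with
  | base => exact le_rfl
  | succ b hab ih =>
    exact (ih fun k hak hkb => h k hak (hkb.trans b.lt_succ_self)).trans (h b hab b.lt_succ_self)

section Structure

lemma exists_input_place (N : WorkflowNet P T) (t : T) : ∃ p, N.Fpt p t := by
  obtain ⟨hpath, -⟩ := N.on_path (Sum.inr t)
  rcases hpath.cases_tail with h | ⟨_ | t', -, hedge⟩
  · exact Sum.inl_ne_inr h.symm |>.elim
  · exact ⟨_, hedge⟩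
  · exact hedge.elim

lemma not_enables_finalMarking (t : T) : ¬ Enables N (finalMarking N) t := by
  intro hen
  obtain ⟨p, hp⟩ := exists_input_place N t
  have htoken := hen p hp
  by_cases hps : p = N.sink
  · exact N.sink_post_empty t (hps ▸ hp)
  · simp [finalMarking, hps] at htoken

lemma preset_eq_empty_iff {p : P} : preset N p = ∅ ↔ p = N.source :=
  ⟨fun h => N.source_unique p fun _ ht => h.subset ht,
    fun h => Set.eq_empty_of_forall_notMem fun t ht => N.source_pre_empty t (h ▸ ht)⟩

lemma postset_eq_empty_iff {p : P} : postset N p = ∅ ↔ p = N.sink :=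
  ⟨fun h => N.sink_unique p fun _ ht => h.subset ht,
    fun h => Set.eq_empty_of_forall_notMem fun t ht => N.sink_post_empty t (h ▸ ht)⟩

lemma placeConstraint_source {σ : List T} :
    PlaceConstraint N N.source σ ↔ AtMostOneC (postset N N.source) σ := by
  simp [PlaceConstraint, preset_eq_empty_iff]

lemma placeConstraint_sink (hne : N.source ≠ N.sink) {σ : List T} :
    PlaceConstraint N N.sink σ ↔ EndC (preset N N.sink) σ := by
  simp [PlaceConstraint, preset_eq_empty_iff, postset_eq_empty_iff, hne.symm]

lemma placeConstraint_of_ne {p : P} (hps : p ≠ N.source) (hpt : p ≠ N.sink) {σ : List T} :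
    PlaceConstraint N p σ ↔ AltPrecC (preset N p) (postset N p) σ := by
  simp [PlaceConstraint, preset_eq_empty_iff, postset_eq_empty_iff, hps, hpt]

end Structure

section Firing

variable {M M' M'' : P → ℕ} {t : T} {σ τ : List T} {p : P}

noncomputable def step (N : WorkflowNet P T) (M : P → ℕ) (t : T) : P → ℕ := fun p =>
  if N.Fpt p t ∧ ¬ N.Ftp t p then M p - 1
  else if N.Ftp t p ∧ ¬ N.Fpt p t then M p + 1
  else M p

lemma fires_iff : Fires N M t M' ↔ Enables N M t ∧ M' = step N M t := by
  refine ⟨fun ⟨hen, hM'⟩ => ⟨hen, funext fun p => ?_⟩, ?_⟩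
  · obtain ⟨hconsume, hproduce, hkeep⟩ := hM' p
    unfold step
    split_ifs with h₁ h₂
    exacts [hconsume h₁, hproduce h₂, hkeep h₁ h₂]
  · rintro ⟨hen, rfl⟩
    refine ⟨hen, fun p => ?_⟩
    unfold step
    split_ifs <;> tauto

lemma step_apply_of_consumes (hc : N.Fpt p t) (hnp : ¬ N.Ftp t p) : step N M t p = M p - 1 :=
  if_pos ⟨hc, hnp⟩

lemma step_apply_le (h : ¬ N.Ftp t p) : step N M t p ≤ M p := by
  unfold step
  split_ifs <;> first | omega | tauto

lemma le_step_apply (h : ¬ N.Fpt p t) : M p ≤ step N M t p := by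
  unfold step
  split_ifs <;> first | omega | tauto

lemma step_apply_pos_of_produces (hen : Enables N M t) (h : N.Ftp t p) : 0 < step N M t p := by
  unfold step
  split_ifs with h₁ h₂
  · exact absurd h h₁.2
  · omega
  · exact hen p (by tauto)

lemma firesSeq_nil_iff : FiresSeq N M [] M' ↔ M' = M :=
  ⟨fun | .nil _ => rfl, by rintro rfl; exact .nil _⟩

lemma firesSeq_cons_iff :
    FiresSeq N M (t :: σ) M'' ↔ ∃ M', Fires N M t M' ∧ FiresSeq N M' σ M'' :=
  ⟨fun | .cons h₁ h₂ => ⟨_, h₁, h₂⟩, fun ⟨_, h₁, h₂⟩ => .cons h₁ h₂⟩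

lemma firesSeq_singleton_iff : FiresSeq N M [t] M' ↔ Fires N M t M' := by
  simp [firesSeq_cons_iff, firesSeq_nil_iff]

lemma firesSeq_append_iff :
    FiresSeq N M (σ ++ τ) M'' ↔ ∃ M', FiresSeq N M σ M' ∧ FiresSeq N M' τ M'' := by
  induction σ generalizing M with
  | nil => simp [firesSeq_nil_iff]
  | cons t σ ih =>
    simp only [List.cons_append, firesSeq_cons_iff, ih]
    grind

noncomputable def markingAfter (N : WorkflowNet P T) (M : P → ℕ) (σ : List T) (n : ℕ) :
    P → ℕ :=
  (σ.take n).foldl (step N) M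

@[simp] lemma markingAfter_zero : markingAfter N M σ 0 = M := rfl

lemma markingAfter_succ {n : ℕ} (hn : n < σ.length) :
    markingAfter N M σ (n + 1) = step N (markingAfter N M σ n) σ[n] := by
  simp only [markingAfter, List.take_add_one, List.getElem?_eq_getElem hn, Option.toList_some,
    List.foldl_append, List.foldl_cons, List.foldl_nil]

def EnabledAlong (N : WorkflowNet P T) (M : P → ℕ) (σ : List T) : Prop :=
  ∀ n (hn : n < σ.length), Enables N (markingAfter N M σ n) σ[n]

lemma enabledAlong_cons_iff :
    EnabledAlong N M (t :: σ) ↔ Enables N M t ∧ EnabledAlong N (step N M t) σ := by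
  refine ⟨fun h => ⟨h 0 (by simp), fun n hn => h (n + 1) (by simpa using hn)⟩, ?_⟩
  rintro ⟨hhead, htail⟩ (_ | n) hn
  exacts [hhead, htail n (by simpa using hn)]

lemma firesSeq_iff : FiresSeq N M σ M' ↔ EnabledAlong N M σ ∧ M' = σ.foldl (step N) M := by
  induction σ generalizing M with
  | nil => simp [firesSeq_nil_iff, EnabledAlong]
  | cons t σ ih => simp [firesSeq_cons_iff, fires_iff, ih, enabledAlong_cons_iff, and_assoc]

lemma reachable_markingAfter (h : FiresSeq N (initialMarking N) σ M) (n : ℕ) :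
    Reachable N (markingAfter N (initialMarking N) σ n) := by
  rw [← List.take_append_drop n σ, firesSeq_append_iff] at h
  obtain ⟨M', hprefix, -⟩ := h
  obtain ⟨-, rfl⟩ := firesSeq_iff.1 hprefix
  exact ⟨_, hprefix⟩

lemma markingAfter_apply_le_of_not_consumed {a b : ℕ} (hab : a ≤ b) (hb : b ≤ σ.length)
    (h : ∀ k (hk : k < σ.length), a ≤ k → k < b → σ[k] ∉ postset N p) :
    markingAfter N M σ a p ≤ markingAfter N M σ b p :=
  le_of_forall_Ico_le_succ (f := fun n => markingAfter N M σ n p) hab fun k hak hkb => by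
    rw [markingAfter_succ (hkb.trans_le hb)]
    exact le_step_apply (h k _ hak hkb)

lemma markingAfter_apply_le_of_not_produced {a b : ℕ} (hab : a ≤ b) (hb : b ≤ σ.length)
    (h : ∀ k (hk : k < σ.length), a ≤ k → k < b → σ[k] ∉ preset N p) :
    markingAfter N M σ b p ≤ markingAfter N M σ a p :=
  le_of_forall_Ico_le_succ (α := ℕᵒᵈ) (f := fun n => markingAfter N M σ n p) hab
    fun k hak hkb => by
      rw [markingAfter_succ (hkb.trans_le hb)]
      exact step_apply_le (h k _ hak hkb)

lemma exists_produced_of_markingAfter_pos (hM : M p = 0)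
    (hsafe : ∀ n, markingAfter N M σ n p ≤ 1) {i : ℕ} (hi : i ≤ σ.length)
    (hpos : 0 < markingAfter N M σ i p) :
    ∃ j : Fin σ.length, j < i ∧ σ.get j ∈ preset N p ∧
      ∀ k : Fin σ.length, j < k → k < i → σ.get k ∉ postset N p := by
  induction i with
  | zero => simp [hM] at hpos
  | succ i ih =>
    have hi' : i < σ.length := hi
    by_cases hprod : σ[i] ∈ preset N p
    · refine ⟨⟨i, hi'⟩, i.lt_succ_self, hprod, fun k hik hki => ?_⟩
      have : i < k := hik
      omega
    · rw [markingAfter_succ hi'] at hpos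
      obtain ⟨j, hji, hj, hquiet⟩ := ih hi'.le (hpos.trans_le (step_apply_le hprod))
      refine ⟨j, hji.trans i.lt_succ_self, hj, fun k hjk hki => ?_⟩
      rcases Nat.lt_succ_iff_lt_or_eq.1 hki with hki | hki
      · exact hquiet k hjk hki
      · intro hcons
        obtain rfl : k = ⟨i, hi'⟩ := Fin.ext hki
        replace hcons : σ[i] ∈ postset N p := hcons
        rw [step_apply_of_consumes hcons hprod] at hpos
        have := hsafe i
        omega

end Firing

section Declare

variable {σ : List T}

lemma atMostOneC_postset_source (hen : EnabledAlong N (initialMarking N) σ) :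
    AtMostOneC (postset N N.source) σ := by
  have hnever_refilled {a b : ℕ} (hab : a ≤ b) (hb : b ≤ σ.length) :
      markingAfter N (initialMarking N) σ b N.source ≤
        markingAfter N (initialMarking N) σ a N.source :=
    markingAfter_apply_le_of_not_produced hab hb fun _ _ _ _ => N.source_pre_empty _
  suffices ∀ i j : Fin σ.length, i < j →
      σ.get i ∈ postset N N.source → σ.get j ∉ postset N N.source by
    intro i j hi hj
    by_contra hij
    rcases lt_or_gt_of_ne hij with h | h
    exacts [this i j h hi hj, this j i h hj hi]
  intro i j hij hi hj
  have hle_one : markingAfter N (initialMarking N) σ i N.source ≤ 1 := by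
    simpa [initialMarking] using hnever_refilled (Nat.zero_le i) i.isLt.le
  have hconsumed : markingAfter N (initialMarking N) σ (i + 1) N.source =
      markingAfter N (initialMarking N) σ i N.source - 1 := by
    rw [markingAfter_succ i.isLt]
    exact step_apply_of_consumes hi (N.source_pre_empty _)
  have hempty := hnever_refilled (a := i + 1) hij j.isLt.le
  have htoken := hen j j.isLt _ hj
  omega

lemma endC_preset_sink_of_isRun (hpc : ProperCompletion N) (hne : N.source ≠ N.sink)
    (hrun : IsRun N σ) : EndC (preset N N.sink) σ := by
  rcases List.eq_nil_or_concat' σ with rfl | ⟨σ', t, rfl⟩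
  · have hinit := congrFun (firesSeq_nil_iff.1 hrun) N.source
    simp [initialMarking, finalMarking, hne] at hinit
  refine ⟨t, ?_, List.getLast?_concat⟩
  obtain ⟨M, hprefix, hlast⟩ := firesSeq_append_iff.1 hrun
  obtain ⟨hen, hfinal⟩ := fires_iff.1 (firesSeq_singleton_iff.1 hlast)
  by_contra ht
  have hM : M = finalMarking N := hpc M ⟨σ', hprefix⟩ <|
    calc 0 < finalMarking N N.sink := by simp [finalMarking]
      _ = step N M t N.sink := by rw [hfinal]
      _ ≤ M N.sink := step_apply_le ht
  exact not_enables_finalMarking t (hM ▸ hen)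

lemma altPrecC_of_firesSeq (hsafe : Safe N) {M : P → ℕ}
    (hfs : FiresSeq N (initialMarking N) σ M) {p : P} (hp : p ≠ N.source) :
    AltPrecC (preset N p) (postset N p) σ := fun i hi =>
  exists_produced_of_markingAfter_pos (by simp [initialMarking, hp])
    (fun n => hsafe _ (reachable_markingAfter hfs n) p) i.isLt.le
    ((firesSeq_iff.1 hfs).1 i i.isLt p hi)

lemma modelTrace_of_isRun (hsafe : Safe N) (hpc : ProperCompletion N)
    (hne : N.source ≠ N.sink) (hrun : IsRun N σ) : ModelTrace N σ := by
  intro p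
  by_cases hps : p = N.source
  · exact hps ▸ placeConstraint_source.2 (atMostOneC_postset_source (firesSeq_iff.1 hrun).1)
  by_cases hpt : p = N.sink
  · exact hpt ▸ (placeConstraint_sink hne).2 (endC_preset_sink_of_isRun hpc hne hrun)
  exact (placeConstraint_of_ne hps hpt).2 (altPrecC_of_firesSeq hsafe hrun hps)

lemma enabledAlong_of_modelTrace (hσ : ModelTrace N σ) :
    EnabledAlong N (initialMarking N) σ := by
  intro n
  induction n using Nat.strong_induction_on with
  | _ n ih =>
  intro hn p hp
  by_cases hps : p = N.source
  · subst hps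
    have hsource := placeConstraint_source.1 (hσ N.source)
    have hkept : markingAfter N (initialMarking N) σ 0 N.source ≤
        markingAfter N (initialMarking N) σ n N.source :=
      markingAfter_apply_le_of_not_consumed (Nat.zero_le n) hn.le fun k hk _ hkn hk' =>
        absurd (hsource ⟨k, hk⟩ ⟨n, hn⟩ hk' hp) (by simp; omega)
    exact (by simpa [initialMarking] using hkept : 1 ≤ _)
  have hpt : p ≠ N.sink := by
    rintro rfl
    exact N.sink_post_empty _ hp
  obtain ⟨j, hjn, hj, hquiet⟩ := (placeConstraint_of_ne hps hpt).1 (hσ p) ⟨n, hn⟩ hp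
  calc 0 < markingAfter N (initialMarking N) σ (j + 1) p := by
        rw [markingAfter_succ j.isLt]
        exact step_apply_pos_of_produces (ih j hjn j.isLt) hj
    _ ≤ markingAfter N (initialMarking N) σ n p :=
        markingAfter_apply_le_of_not_consumed hjn hn.le fun k hk hjk hkn =>
          hquiet ⟨k, hk⟩ hjk hkn

lemma isRun_of_modelTrace (hpc : ProperCompletion N) (hne : N.source ≠ N.sink)
    (hσ : ModelTrace N σ) : IsRun N σ := by
  have hfs := firesSeq_iff.2 ⟨enabledAlong_of_modelTrace hσ, rfl⟩
  obtain ⟨a, ha, hlast⟩ := (placeConstraint_sink hne).1 (hσ N.sink)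
  rcases List.eq_nil_or_concat' σ with rfl | ⟨σ', t, rfl⟩
  · simp at hlast
  obtain rfl : t = a := by simpa using hlast
  obtain ⟨M, -, hstep⟩ := firesSeq_append_iff.1 hfs
  obtain ⟨hen, hM⟩ := fires_iff.1 (firesSeq_singleton_iff.1 hstep)
  have hsink : 0 < (σ' ++ [t]).foldl (step N) (initialMarking N) N.sink :=
    hM ▸ step_apply_pos_of_produces hen ha
  rw [IsRun, ← hpc _ ⟨_, hfs⟩ hsink]
  exact hfs

end Declare

theorem runs_eq_model_traces_general {P T : Type}
    (N : WorkflowNet P T) (hsafe : Safe N) (hsound : Sound N)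
    (hne : N.source ≠ N.sink) :
    {σ : List T | IsRun N σ} = {σ : List T | ModelTrace N σ} := by
  ext σ
  exact ⟨modelTrace_of_isRun hsafe hsound.2.1 hne, isRun_of_modelTrace hsound.2.1 hne⟩

/-- Theorem 1, combined: for a safe and sound workflow net (with `▶ ≠ ■`),
the language of runs coincides exactly with the set of model traces of the
synthesized Declare specification. -/
theorem runs_eq_model_traces {P T : Type} [Finite P] [Finite T]
    (N : WorkflowNet P T) (hsafe : Safe N) (hsound : Sound N)
    (hne : N.source ≠ N.sink) :
    {σ : List T | IsRun N σ} = {σ : List T | ModelTrace N σ} :=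
  runs_eq_model_traces_general N hsafe hsound hne
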